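/- arXiv:2107.04360 — 3 statements merged into one kernel-verified Lean document; each statement's English description precedes it below -/
import Mathlib

section
/- Fix f_min ∈ R, ŷ ∈ R, λ > 0 and define ẼI(σ̂) = (f_min - ŷ)·sigm_λ((f_min - ŷ)/σ̂) + σ̂·γ((f_min - ŷ)/σ̂) for σ̂ > 0, with sigm_λ(t) = 1/(1+e^{-λt}) and γ(t) = e^{-t²/2}. Then as σ̂ → 0⁺, ẼI(σ̂) → f_min - ŷ if f_min > ŷ, and ẼI(σ̂) → 0 if f_min < ŷ. -/
open Filter Topology Real

theorem tendsto_const_div_nhdsGT_zero_atTop {c : ℝ} (hc : 0 < c) :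
    Tendsto (fun σ : ℝ => c / σ) (𝓝[>] 0) atTop := by
  simpa only [div_eq_mul_inv] using tendsto_inv_nhdsGT_zero.const_mul_atTop hc

theorem tendsto_const_div_nhdsGT_zero_atBot {c : ℝ} (hc : c < 0) :
    Tendsto (fun σ : ℝ => c / σ) (𝓝[>] 0) atBot := by
  simpa only [div_eq_mul_inv] using tendsto_inv_nhdsGT_zero.const_mul_atTop_of_neg hc

theorem tendsto_mul_exp_neg_div_sq_nhdsGT_zero (d : ℝ) :
    Tendsto (fun σ : ℝ => σ * exp (-(d / σ) ^ 2 / 2)) (𝓝[>] 0) (𝓝 0) := by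
  refine squeeze_zero' ?_ ?_ (tendsto_nhdsWithin_of_tendsto_nhds (continuous_id.tendsto 0))
  · filter_upwards [self_mem_nhdsWithin] with σ hσ
    exact mul_nonneg (le_of_lt hσ) (exp_pos _).le
  · filter_upwards [self_mem_nhdsWithin] with σ hσ
    have hexp : exp (-(d / σ) ^ 2 / 2) ≤ 1 := exp_le_one_iff.2 (by nlinarith [sq_nonneg (d / σ)])
    simpa using mul_le_mul_of_nonneg_left hexp (le_of_lt hσ)

theorem modified_EI_vanishing_uncertainty (fmin yhat : ℝ) (lam : ℝ) (hlam : 0 < lam) :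
    (fmin > yhat →
      Filter.Tendsto
        (fun σ : ℝ => (fmin - yhat) * (1 / (1 + Real.exp (-(lam * ((fmin - yhat) / σ))))) +
          σ * Real.exp (-((fmin - yhat) / σ) ^ 2 / 2))
        (nhdsWithin 0 (Set.Ioi 0)) (nhds (fmin - yhat))) ∧
    (fmin < yhat →
      Filter.Tendsto
        (fun σ : ℝ => (fmin - yhat) * (1 / (1 + Real.exp (-(lam * ((fmin - yhat) / σ))))) +
          σ * Real.exp (-((fmin - yhat) / σ) ^ 2 / 2))
        (nhdsWithin 0 (Set.Ioi 0)) (nhds 0)) := by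
  set d := fmin - yhat
  have hEI : ∀ s, Tendsto (fun σ : ℝ => sigmoid (lam * d / σ)) (𝓝[>] 0) (𝓝 s) →
      Tendsto (fun σ : ℝ => d * (1 / (1 + exp (-(lam * (d / σ))))) +
        σ * exp (-(d / σ) ^ 2 / 2)) (𝓝[>] 0) (𝓝 (d * s)) := fun s hs => by
    simpa only [sigmoid_def, mul_div_assoc, one_div, add_zero] using
      (hs.const_mul d).add (tendsto_mul_exp_neg_div_sq_nhdsGT_zero d)
  refine ⟨fun h => ?_, fun h => ?_⟩
  · simpa using hEI 1 (tendsto_sigmoid_atTop.comp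
      (tendsto_const_div_nhdsGT_zero_atTop (mul_pos hlam (sub_pos.2 h))))
  · simpa using hEI 0 (tendsto_sigmoid_atBot.comp
      (tendsto_const_div_nhdsGT_zero_atBot (mul_neg_of_pos_of_neg hlam (sub_neg.2 h))))
end

section
/- Fix f_min ∈ R, ŷ ∈ R, λ > 0 and define ẼI(σ̂) as above for σ̂ > 0. Then lim_{σ̂→+∞} ẼI(σ̂)/σ̂ = 1 and lim_{σ̂→+∞} (ẼI(σ̂) - σ̂) = (f_min - ŷ)/2. -/
open Filter Real

theorem modified_EI_aux (a : ℝ) (lam : ℝ) (hlam : 0 < lam) :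
    Filter.Tendsto
      (fun σ : ℝ => (a * (1 / (1 + Real.exp (-(lam * (a / σ))))) +
        σ * Real.exp (-(a / σ) ^ 2 / 2)) / σ)
      Filter.atTop (nhds 1) ∧
    Filter.Tendsto
      (fun σ : ℝ => (a * (1 / (1 + Real.exp (-(lam * (a / σ))))) +
        σ * Real.exp (-(a / σ) ^ 2 / 2)) - σ)
      Filter.atTop (nhds (a / 2)) := by
  have h0 : Tendsto (fun σ : ℝ => a / σ) atTop (nhds 0) := by
    exact Filter.Tendsto.div_atTop tendsto_const_nhds tendsto_id
  have hsig : Tendsto (fun σ : ℝ => 1 / (1 + Real.exp (-(lam * (a / σ))))) atTop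
      (nhds (1 / 2)) := by
    have hc : Continuous (fun x : ℝ => 1 / (1 + Real.exp (-(lam * x)))) := by
      apply Continuous.div continuous_const
      · continuity
      · intro x
        positivity
    have := (hc.tendsto 0).comp h0
    norm_num at this
    convert this using 2
    norm_num
  have hexp : Tendsto (fun σ : ℝ => Real.exp (-(a / σ) ^ 2 / 2)) atTop (nhds 1) := by
    have hc : Continuous (fun x : ℝ => Real.exp (-x ^ 2 / 2)) := by continuity
    have := (hc.tendsto 0).comp h0
    simpa [Function.comp_def] using this
  constructor
  · -- first limit
    have h1 : Tendsto (fun σ : ℝ => a / σ * (1 / (1 + Real.exp (-(lam * (a / σ)))))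
        + Real.exp (-(a / σ) ^ 2 / 2)) atTop (nhds 1) := by
      have := (h0.mul hsig).add hexp
      simpa using this
    refine h1.congr' ?_
    filter_upwards [eventually_gt_atTop (0 : ℝ)] with σ hσ
    field_simp
  · -- second limit
    have hrem : Tendsto (fun σ : ℝ => σ * (Real.exp (-(a / σ) ^ 2 / 2) - 1)) atTop
        (nhds 0) := by
      have hlow : Tendsto (fun σ : ℝ => -(a ^ 2 / 2) / σ) atTop (nhds 0) := by
        exact Filter.Tendsto.div_atTop tendsto_const_nhds tendsto_id
      refine tendsto_of_tendsto_of_tendsto_of_le_of_le' hlow tendsto_const_nhds ?_ ?_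
      · filter_upwards [eventually_gt_atTop (0 : ℝ)] with σ hσ
        have heq : -(a / σ) ^ 2 / 2 = -((a / σ) ^ 2 / 2) := by ring
        have hx : Real.exp (-(a / σ) ^ 2 / 2) - 1 ≥ -((a / σ) ^ 2 / 2) := by
          have := Real.add_one_le_exp (-((a / σ) ^ 2 / 2))
          rw [heq]
          linarith
        have := mul_le_mul_of_nonneg_left hx hσ.le
        calc -(a ^ 2 / 2) / σ = σ * (-((a / σ) ^ 2 / 2)) := by
              field_simp
          _ ≤ σ * (Real.exp (-(a / σ) ^ 2 / 2) - 1) := this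
      · filter_upwards [eventually_gt_atTop (0 : ℝ)] with σ hσ
        have hx : Real.exp (-(a / σ) ^ 2 / 2) - 1 ≤ 0 := by
          have : Real.exp (-(a / σ) ^ 2 / 2) ≤ 1 := by
            rw [show (1 : ℝ) = Real.exp 0 by simp]
            apply Real.exp_le_exp.mpr
            nlinarith [sq_nonneg (a / σ)]
          linarith
        have := mul_nonpos_of_nonneg_of_nonpos hσ.le hx
        linarith
    have h2 : Tendsto (fun σ : ℝ => a * (1 / (1 + Real.exp (-(lam * (a / σ)))))
        + σ * (Real.exp (-(a / σ) ^ 2 / 2) - 1)) atTop (nhds (a / 2)) := by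
      have := (hsig.const_mul a).add hrem
      simpa [mul_one_div, div_eq_mul_inv] using this
    refine h2.congr' ?_
    filter_upwards [eventually_gt_atTop (0 : ℝ)] with σ hσ
    ring

theorem modified_EI_large_uncertainty (fmin yhat : ℝ) (lam : ℝ) (hlam : 0 < lam) :
    Filter.Tendsto
      (fun σ : ℝ => ((fmin - yhat) * (1 / (1 + Real.exp (-(lam * ((fmin - yhat) / σ))))) +
        σ * Real.exp (-((fmin - yhat) / σ) ^ 2 / 2)) / σ)
      Filter.atTop (nhds 1) ∧
    Filter.Tendsto
      (fun σ : ℝ => ((fmin - yhat) * (1 / (1 + Real.exp (-(lam * ((fmin - yhat) / σ))))) +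
        σ * Real.exp (-((fmin - yhat) / σ) ^ 2 / 2)) - σ)
      Filter.atTop (nhds ((fmin - yhat) / 2)) :=
  modified_EI_aux (fmin - yhat) lam hlam
end

section
/- With d_1,…,d_{n+1} as defined via d_i = e_i - ((1 + 1/√(n+1))/n)·𝟙 for i ≤ n and d_{n+1} = (1/√(2(n+1)))·𝟙, the set {x + 0.001·d_i : i = 1,…,n+1} is a simplex for every x ∈ R^n; that is, the n+1 points are affinely independent. -/
/-!
Each difference `d i - d (n+1)` equals `e i - γ 𝟙` with
`γ = (1 + 1/√(n+1))/n + 1/√(2(n+1))`, the image of `e i` under `I - γ 𝟙 𝟙ᵀ`. This map is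
injective as soon as `n γ ≠ 1` (a kernel vector `y = γ (∑ y) 𝟙` has `∑ y = n γ ∑ y`), and
here `n γ` is either `0` or greater than `1`. Translating by `x` and scaling by `0.001`
preserve affine independence.
-/

theorem AffineIndependent.const_add_smul {k V ι : Type*} [Field k] [AddCommGroup V] [Module k V]
    {p : ι → V} (hp : AffineIndependent k p) (x : V) {c : k} (hc : c ≠ 0) :
    AffineIndependent k (fun i => x + c • p i) :=
  ((affineIndependent_smul (k := k) (a := Units.mk0 c hc)).2 hp).vadd (v := x)

theorem affineIndependent_iff_linearIndependent_castSucc_vsub_last {k V P : Type*} [Ring k]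
    [AddCommGroup V] [Module k V] [AddTorsor V P] {n : ℕ} (p : Fin (n + 1) → P) :
    AffineIndependent k p ↔
      LinearIndependent k (fun i : Fin n => p i.castSucc -ᵥ p (Fin.last n)) := by
  rw [affineIndependent_iff_linearIndependent_vsub k p (Fin.last n),
    ← linearIndependent_equiv (finSuccAboveEquiv (Fin.last n))]
  simp [Function.comp_def, finSuccAboveEquiv_apply]

theorem eq_zero_of_eq_smul_sum_smul_one {K ι : Type*} [Field K] [Fintype ι] {γ : K}
    (hγ : (Fintype.card ι : K) * γ ≠ 1) {y : ι → K} (hy : y = (γ * ∑ i, y i) • 1) : y = 0 := by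
  have hsum : ∑ i, y i = (Fintype.card ι : K) * γ * ∑ i, y i := by
    conv_lhs => rw [hy]
    simp [Finset.sum_const, mul_assoc]
  have hsum0 : ∑ i, y i = 0 := by
    have : ((Fintype.card ι : K) * γ - 1) * ∑ i, y i = 0 := by linear_combination -hsum
    exact (mul_eq_zero.1 this).resolve_left (sub_ne_zero.2 hγ)
  rw [hy, hsum0, mul_zero, zero_smul]

theorem linearIndependent_single_sub_smul_one {K ι : Type*} [Field K] [Fintype ι] [DecidableEq ι]
    {γ : K} (hγ : (Fintype.card ι : K) * γ ≠ 1) :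
    LinearIndependent K (fun i : ι => Pi.single i 1 - γ • (1 : ι → K)) := by
  rw [Fintype.linearIndependent_iff]
  intro g hg
  have hcomb : ∑ i, g i • (Pi.single i 1 - γ • (1 : ι → K)) = g - (γ * ∑ i, g i) • 1 := by
    simp only [smul_sub, Finset.sum_sub_distrib, ← Finset.sum_smul, smul_smul]
    rw [← Finset.sum_mul, mul_comm]
    congr 1
    ext j
    simp [Finset.sum_apply, Pi.single_apply]
  exact congrFun (eq_zero_of_eq_smul_sum_smul_one hγ (sub_eq_zero.1 (hcomb ▸ hg)))

theorem natCast_mul_offset_ne_one (n : ℕ) : (n : ℝ) * ((1 + 1 / Real.sqrt (n+1)) / n + 1 / Real.sqrt (2 * (n+1))) ≠ 1 := by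
  rcases Nat.eq_zero_or_pos n with rfl | hn
  · simp
  · have hn' : (n : ℝ) ≠ 0 := by positivity
    have : (n : ℝ) * ((1 + 1 / Real.sqrt (n+1)) / n) = 1 + 1 / Real.sqrt (n+1) := by field_simp
    rw [mul_add, this]
    have : 0 < (n : ℝ) * (1 / Real.sqrt (2 * (n+1))) := by positivity
    have : 0 < 1 / Real.sqrt (n+1) := by positivity
    linarith

theorem simplex_affinely_independent_general (n : ℕ)
    (ones : EuclideanSpace ℝ (Fin n)) (hones : ones = WithLp.toLp 2 (fun _ => (1:ℝ)))
    (d : Fin (n+1) → EuclideanSpace ℝ (Fin n))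
    (hd : ∀ i : Fin n, d i.castSucc =
      EuclideanSpace.single i 1 - ((1 + 1 / Real.sqrt (n+1)) / n) • ones)
    (hdlast : d (Fin.last n) = (1 / Real.sqrt (2 * (n+1))) • ones)
    (x : EuclideanSpace ℝ (Fin n)) :
    AffineIndependent ℝ (fun i : Fin (n+1) => x + (0.001 : ℝ) • d i) := by
  set γ : ℝ := (1 + 1 / Real.sqrt (n+1)) / n + 1 / Real.sqrt (2 * (n+1))
  have hdiff : ∀ i : Fin n,
      d i.castSucc -ᵥ d (Fin.last n) = WithLp.toLp 2 (Pi.single i 1 - γ • 1) := by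
    intro i
    rw [hd, hdlast, hones, vsub_eq_sub, sub_sub, ← add_smul]
    rfl
  have hγ : (Fintype.card (Fin n) : ℝ) * γ ≠ 1 := by
    rw [Fintype.card_fin]
    exact natCast_mul_offset_ne_one n
  have hd_indep : AffineIndependent ℝ d := by
    rw [affineIndependent_iff_linearIndependent_castSucc_vsub_last]
    simp_rw [hdiff]
    exact (linearIndependent_single_sub_smul_one hγ).map'
      (WithLp.linearEquiv 2 ℝ (Fin n → ℝ)).symm.toLinearMap (LinearEquiv.ker _)
  exact hd_indep.const_add_smul x (by norm_num)

theorem simplex_affinely_independent (n : ℕ) (hn : 1 ≤ n)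
    (ones : EuclideanSpace ℝ (Fin n)) (hones : ones = WithLp.toLp 2 (fun _ => (1:ℝ)))
    (d : Fin (n+1) → EuclideanSpace ℝ (Fin n))
    (hd : ∀ i : Fin n, d i.castSucc =
      EuclideanSpace.single i 1 - ((1 + 1 / Real.sqrt (n+1)) / n) • ones)
    (hdlast : d (Fin.last n) = (1 / Real.sqrt (2 * (n+1))) • ones)
    (x : EuclideanSpace ℝ (Fin n)) :
    AffineIndependent ℝ (fun i : Fin (n+1) => x + (0.001 : ℝ) • d i) :=
  simplex_affinely_independent_general n ones hones d hd hdlast x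
end
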